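/- arXiv:2405.11635 — 2 statements merged into one kernel-verified Lean document; each statement's English description precedes it below -/
import Mathlib

section
/- Let B > 0 and let (a_n)_{n≥0} be a sequence of positive reals with a_0 > 0, B·a_n < 1 for all n, and satisfying the recurrence inequality a_n ≥ a_{n−1}·(1 − B·a_{n−1}) for all n ≥ 1. Then the series ∑_{n≥0} a_n diverges (is not summable). -/
lemma exp_neg_two_le (x : ℝ) (hx0 : 0 ≤ x) (hx : x ≤ 1/2) :
    Real.exp (-(2*x)) ≤ 1 - x := by
  have h1 : 1 + 2*x ≤ Real.exp (2*x) := by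
    have := Real.add_one_le_exp (2*x); linarith
  have h2 : Real.exp (-(2*x)) * Real.exp (2*x) = 1 := by
    rw [← Real.exp_add]; simp
  nlinarith [Real.exp_pos (2*x), Real.exp_pos (-(2*x))]

/-- If `a` is a positive sequence with `B·a n < 1` and `a (n+1) ≥ a n (1 − B·a n)`,
then `∑ a n` diverges. -/
theorem recurrence_not_summable (B : ℝ) (hB : 0 < B) (a : ℕ → ℝ)
    (hpos : ∀ n, 0 < a n) (hlt : ∀ n, B * a n < 1)
    (hrec : ∀ n, a n * (1 - B * a n) ≤ a (n + 1)) :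
    ¬ Summable a := by
  intro hsum
  have htend : Filter.Tendsto a Filter.atTop (nhds 0) := hsum.tendsto_atTop_zero
  -- choose N with a n ≤ 1/(2B) for n ≥ N
  have hev : ∀ᶠ n in Filter.atTop, a n < 1/(2*B) := by
    have : (0:ℝ) < 1/(2*B) := by positivity
    exact htend.eventually (gt_mem_nhds this)
  obtain ⟨N, hN⟩ := Filter.eventually_atTop.1 hev
  set S : ℝ := ∑' n, a n with hS
  set c : ℝ := a N * Real.exp (-(2*B*S)) with hc
  have hcpos : 0 < c := mul_pos (hpos N) (Real.exp_pos _)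
  have key : ∀ n, N ≤ n →
      a N * Real.exp (-(2*B * ∑ i ∈ Finset.Ico N n, a i)) ≤ a n := by
    intro n hn
    induction n with
    | zero =>
        have : N = 0 := Nat.le_zero.1 hn
        subst this; simp
    | succ m ih =>
        rcases Nat.lt_or_ge N (m+1) with h | h
        · have hNm : N ≤ m := Nat.lt_succ_iff.1 h
          have ihm := ih hNm
          have hsplit : ∑ i ∈ Finset.Ico N (m+1), a i
              = (∑ i ∈ Finset.Ico N m, a i) + a m := Finset.sum_Ico_succ_top hNm a
          have hBm : B * a m ≤ 1/2 := by
            have := hN m hNm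
            have h2B : 0 < 2*B := by positivity
            calc B * a m ≤ B * (1/(2*B)) := by nlinarith
              _ = 1/2 := by field_simp
          have hexp : Real.exp (-(2*(B * a m))) ≤ 1 - B * a m :=
            exp_neg_two_le (B * a m) (mul_nonneg hB.le (hpos m).le) hBm
          have step1 : a N * Real.exp (-(2*B * ∑ i ∈ Finset.Ico N (m+1), a i))
              = (a N * Real.exp (-(2*B * ∑ i ∈ Finset.Ico N m, a i)))
                * Real.exp (-(2*(B * a m))) := by
            rw [hsplit, show -(2*B*((∑ i ∈ Finset.Ico N m, a i) + a m))
                = -(2*B * ∑ i ∈ Finset.Ico N m, a i) + -(2*(B * a m)) by ring,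
              Real.exp_add, ← mul_assoc]
          rw [step1]
          have hep : 0 < Real.exp (-(2*(B * a m))) := Real.exp_pos _
          calc (a N * Real.exp (-(2*B * ∑ i ∈ Finset.Ico N m, a i)))
                * Real.exp (-(2*(B * a m)))
              ≤ a m * Real.exp (-(2*(B * a m))) := by nlinarith
            _ ≤ a m * (1 - B * a m) := by nlinarith [hpos m]
            _ ≤ a (m+1) := hrec m
        · have : N = m + 1 := le_antisymm hn h
          subst this; simp
  have hkey2 : ∀ n, N ≤ n → c ≤ a n := by
    intro n hn
    refine le_trans ?_ (key n hn)
    rw [hc]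
    have hsum' : ∑ i ∈ Finset.Ico N n, a i ≤ S := by
      apply Summable.sum_le_tsum _ (fun i _ => (hpos i).le) hsum
    have : -(2*B*S) ≤ -(2*B * ∑ i ∈ Finset.Ico N n, a i) := by nlinarith
    exact mul_le_mul_of_nonneg_left (Real.exp_le_exp.2 this) (hpos N).le
  have hev2 : ∀ᶠ n in Filter.atTop, a n < c := htend.eventually (gt_mem_nhds hcpos)
  obtain ⟨M, hM⟩ := Filter.eventually_atTop.1 hev2
  have h1 := hkey2 (max N M) (le_max_left _ _)
  have h2 := hM (max N M) (le_max_right _ _)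
  linarith
end

section
/- Let X be a metric space, A, B > 0, and suppose two maps c₁, c₂ : ℝ → X satisfy d(c₁(t), c₂(t)) ≤ A·d(c₁(0), c₂(0)) + B for all t ≥ 0 (the 'quasi-bounded asymptote' estimate for stable leaves). If moreover liminf_{t→∞} d(c₁(t), c₂(t)) = δ > 0 and there exist t_n → ∞ and isometries α_n with α_n∘c₁(t_n + ·) → ĉ₁ and α_n∘c₂(t_n + ·) → ĉ₂ pointwise, then δ ≤ d(ĉ₁(t), ĉ₂(t)) ≤ A·d(ĉ₁(0), ĉ₂(0)) + B for all t ∈ ℝ. -/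
/-- Limit version of the quasi-bounded asymptote estimate (Lemma `boundary`): if the
stable-leaf estimate `d(c₁(s+u), c₂(s+u)) ≤ A·d(c₁ s, c₂ s) + B` holds for `u ≥ 0`,
`liminf_{t→∞} d(c₁ t, c₂ t) = δ > 0`, and isometries `α n` shift the pair along times
`t n → ∞` to pointwise limits `climit₁, climit₂`, then
`δ ≤ d(climit₁ t, climit₂ t) ≤ A·d(climit₁ 0, climit₂ 0) + B` for all `t ∈ ℝ`. -/
theorem limit_generalized_strip {X : Type*} [MetricSpace X] (A B δ : ℝ)
    (c₁ c₂ climit₁ climit₂ : ℝ → X) (t : ℕ → ℝ) (α : ℕ → X → X)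
    (hα : ∀ n, Isometry (α n))
    (hA : ∀ s u : ℝ, 0 ≤ u →
      dist (c₁ (s + u)) (c₂ (s + u)) ≤ A * dist (c₁ s) (c₂ s) + B)
    (hδ : 0 < δ)
    (hliminf : Filter.liminf (fun r => dist (c₁ r) (c₂ r)) Filter.atTop = δ)
    (ht : Filter.Tendsto t Filter.atTop Filter.atTop)
    (hconv₁ : ∀ s : ℝ, Filter.Tendsto (fun n => dist (α n (c₁ (t n + s))) (climit₁ s))
      Filter.atTop (nhds 0))
    (hconv₂ : ∀ s : ℝ, Filter.Tendsto (fun n => dist (α n (c₂ (t n + s))) (climit₂ s))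
      Filter.atTop (nhds 0)) :
    ∀ s : ℝ, δ ≤ dist (climit₁ s) (climit₂ s) ∧
      dist (climit₁ s) (climit₂ s) ≤ A * dist (climit₁ 0) (climit₂ 0) + B := by
  have key : ∀ s : ℝ, Filter.Tendsto (fun n => dist (c₁ (t n + s)) (c₂ (t n + s)))
      Filter.atTop (nhds (dist (climit₁ s) (climit₂ s))) := by
    intro s
    have h1 : Filter.Tendsto (fun n => α n (c₁ (t n + s))) Filter.atTop (nhds (climit₁ s)) :=
      tendsto_iff_dist_tendsto_zero.2 (hconv₁ s)
    have h2 : Filter.Tendsto (fun n => α n (c₂ (t n + s))) Filter.atTop (nhds (climit₂ s)) :=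
      tendsto_iff_dist_tendsto_zero.2 (hconv₂ s)
    have h3 := h1.dist h2
    have heq : (fun n => dist (α n (c₁ (t n + s))) (α n (c₂ (t n + s))))
        = fun n => dist (c₁ (t n + s)) (c₂ (t n + s)) :=
      funext fun n => (hα n).dist_eq _ _
    rwa [heq] at h3
  intro s
  constructor
  · -- lower bound
    have hεbound : ∀ ε : ℝ, 0 < ε → δ ≤ dist (climit₁ s) (climit₂ s) + ε := by
      intro ε hε
      have hlt : δ - ε < Filter.liminf (fun r => dist (c₁ r) (c₂ r)) Filter.atTop := by
        rw [hliminf]; linarith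
      have hbdd : Filter.IsBoundedUnder (· ≥ ·) Filter.atTop
          (fun r => dist (c₁ r) (c₂ r)) :=
        Filter.isBoundedUnder_of ⟨0, fun r => dist_nonneg⟩
      have hev : ∀ᶠ r in Filter.atTop, δ - ε < dist (c₁ r) (c₂ r) :=
        Filter.eventually_lt_of_lt_liminf hlt hbdd
      have hts : Filter.Tendsto (fun n => t n + s) Filter.atTop Filter.atTop :=
        Filter.tendsto_atTop_add_const_right _ s ht
      have hev' : ∀ᶠ n in Filter.atTop,
          δ - ε ≤ dist (c₁ (t n + s)) (c₂ (t n + s)) :=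
        (hts.eventually hev).mono fun n hn => le_of_lt hn
      have := ge_of_tendsto (key s) hev'
      linarith
    by_contra hcon
    push_neg at hcon
    have h := hεbound ((δ - dist (climit₁ s) (climit₂ s)) / 2) (by linarith)
    linarith
  · -- upper bound
    have hAm : ∀ m : ℕ, dist (climit₁ s) (climit₂ s)
        ≤ A * dist (c₁ (t m + 0)) (c₂ (t m + 0)) + B := by
      intro m
      refine le_of_tendsto (key s) ?_
      have hev : ∀ᶠ n in Filter.atTop, t m - s ≤ t n := ht.eventually_ge_atTop _
      refine hev.mono fun n hn => ?_
      have hu : (0 : ℝ) ≤ t n + s - (t m + 0) := by linarith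
      have := hA (t m + 0) (t n + s - (t m + 0)) hu
      have harg : t m + 0 + (t n + s - (t m + 0)) = t n + s := by ring
      rwa [harg] at this
    have hlim : Filter.Tendsto
        (fun m => A * dist (c₁ (t m + 0)) (c₂ (t m + 0)) + B) Filter.atTop
        (nhds (A * dist (climit₁ 0) (climit₂ 0) + B)) :=
      ((key 0).const_mul A).add_const B
    exact ge_of_tendsto' hlim hAm
end
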